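/- arXiv:1709.00169 — 2 statements merged into one kernel-verified Lean document; each statement's English description precedes it below -/
import Mathlib

section
/- Let k be a field of characteristic zero and C an affine k-domain. Then C is rigid (has no nonzero locally nilpotent k-derivation) if and only if ML*(C[T]) = C, where C[T] = C^[1]. -/
/-- A derivation is *locally nilpotent* if every element is killed by some iterate. -/
def IsLND {k B : Type*} [CommRing k] [CommRing B] [Algebra k B]
    (D : Derivation k B B) : Prop :=
  ∀ b : B, ∃ n : ℕ, (D.toLinearMap ^ n) b = 0

/-- A derivation *has a slice* if `1` is in its image. -/
def HasSlice {k B : Type*} [CommRing k] [CommRing B] [Algebra k B]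
    (D : Derivation k B B) : Prop :=
  ∃ s : B, D s = 1

/-- The kernel of a derivation, as a subalgebra. -/
def lndKer {k B : Type*} [CommRing k] [CommRing B] [Algebra k B]
    (D : Derivation k B B) : Subalgebra k B where
  carrier := {b | D b = 0}
  mul_mem' := by
    intro a b ha hb
    simp only [Set.mem_setOf_eq] at *
    simp [D.leibniz, ha, hb]
  add_mem' := by
    intro a b ha hb
    simp only [Set.mem_setOf_eq] at *
    simp [ha, hb]
  algebraMap_mem' := fun r => D.map_algebraMap r

/-- The Makar-Limanov invariant: intersection of the kernels of all locally
nilpotent derivations. -/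
def ML (k : Type*) {B : Type*} [CommRing k] [CommRing B] [Algebra k B] : Subalgebra k B :=
  ⨅ D ∈ {D : Derivation k B B | IsLND D}, lndKer D

/-- The Makar-Limanov–Freudenburg invariant: intersection of the kernels of all locally
nilpotent derivations admitting a slice (equal to `⊤ = B` if none exist). -/
def MLstar (k : Type*) {B : Type*} [CommRing k] [CommRing B] [Algebra k B] : Subalgebra k B :=
  ⨅ D ∈ {D : Derivation k B B | IsLND D ∧ HasSlice D}, lndKer D

/-- A `k`-algebra is *rigid* if it admits no nonzero locally nilpotent derivation. -/
def IsRigid (k B : Type*) [CommRing k] [CommRing B] [Algebra k B] : Prop :=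
  ∀ D : Derivation k B B, IsLND D → D = 0

/-- The extension `A ⊆ B` has transcendence degree `n`. -/
def TrdegEq (A B : Type*) [CommRing A] [CommRing B] [Algebra A B] (n : ℕ) : Prop :=
  (∃ x : Fin n → B, AlgebraicIndependent A x) ∧
    ∀ x : Fin (n + 1) → B, ¬ AlgebraicIndependent A x

/-- A subring `A` of a domain `B` is *inert* if `f * g ∈ A` for nonzero `f, g`
implies `f ∈ A` and `g ∈ A`. -/
def IsInert {B : Type*} [CommRing B] (A : Subring B) : Prop :=
  ∀ f g : B, f ≠ 0 → g ≠ 0 → f * g ∈ A → f ∈ A ∧ g ∈ A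

/-!
`ML*(A[X]) ⊆ A` always holds, since `d/dX` is locally nilpotent with slice `X` and kernel `A`.
If `δ ≠ 0` is a locally nilpotent derivation of `A`, then `d/dX + δ` (with `δ` acting on
coefficients) is locally nilpotent with slice `X` and does not kill `A`.

Conversely, for rigid `A` every locally nilpotent `D` of `A[X]` kills `A`
(Crachiola–Makar-Limanov). By finite generation, `deg D a ≤ e` for all `a ∈ A`, and we may
take `deg D X ≤ e + 1`. The part of `D` raising degrees by exactly `e`,
`a X ^ n ↦ (δₑ a + n u a) X ^ (n + e)`, is again locally nilpotent. It sends `X` to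
`u X ^ (e + 1)`, and a locally nilpotent derivation of a domain of characteristic zero never
sends `x` to a nonzero multiple of `x`, so `u = 0`. Then `δₑ` is a locally nilpotent
derivation of `A`, hence `0`, and we descend on `e`.
-/

open Polynomial Finset

namespace Derivation

variable {k B : Type*} [CommRing k] [CommRing B] [Algebra k B]

theorem pow_succ_apply (D : Derivation k B B) (n : ℕ) (x : B) :
    (D.toLinearMap ^ (n + 1)) x = D ((D.toLinearMap ^ n) x) := by
  rw [pow_succ', Module.End.mul_apply]
  rfl

theorem pow_succ_apply' (D : Derivation k B B) (n : ℕ) (x : B) :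
    (D.toLinearMap ^ (n + 1)) x = (D.toLinearMap ^ n) (D x) := by
  rw [pow_succ, Module.End.mul_apply]
  rfl

theorem pow_apply_mul (D : Derivation k B B) (n : ℕ) (x y : B) :
    (D.toLinearMap ^ n) (x * y) =
      ∑ ij ∈ antidiagonal n,
        n.choose ij.1 • ((D.toLinearMap ^ ij.1) x * (D.toLinearMap ^ ij.2) y) := by
  induction n with
  | zero => simp
  | succ n ih =>
    rw [sum_antidiagonal_choose_succ_nsmul
      (fun i j => (D.toLinearMap ^ i) x * (D.toLinearMap ^ j) y), pow_succ_apply, ih, map_sum,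
      ← sum_add_distrib]
    refine sum_congr rfl fun ij hij => ?_
    rw [← Nat.choose_symm_of_eq_add (mem_antidiagonal.1 hij).symm, map_nsmul, leibniz,
      smul_eq_mul, smul_eq_mul, pow_succ_apply, pow_succ_apply, nsmul_add,
      mul_comm ((D.toLinearMap ^ ij.2) y)]

def HasLNDDegree (D : Derivation k B B) (x : B) (n : ℕ) : Prop :=
  (D.toLinearMap ^ n) x ≠ 0 ∧ (D.toLinearMap ^ (n + 1)) x = 0

theorem pow_apply_eq_zero_of_le (D : Derivation k B B) {x : B} {m n : ℕ} (hmn : m ≤ n)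
    (hx : (D.toLinearMap ^ m) x = 0) : (D.toLinearMap ^ n) x = 0 := by
  rw [← Nat.sub_add_cancel hmn, pow_add, Module.End.mul_apply, hx, map_zero]

namespace HasLNDDegree

variable {D : Derivation k B B} {x y : B} {m n : ℕ}

theorem pow_apply_eq_zero (h : D.HasLNDDegree x n) (hm : n < m) :
    (D.toLinearMap ^ m) x = 0 :=
  D.pow_apply_eq_zero_of_le hm h.2

theorem unique (hm : D.HasLNDDegree x m) (hn : D.HasLNDDegree x n) : m = n := by
  by_contra hne
  rcases Nat.lt_or_gt_of_ne hne with h | h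
  · exact hn.1 (hm.pow_apply_eq_zero h)
  · exact hm.1 (hn.pow_apply_eq_zero h)

theorem apply (h : D.HasLNDDegree x (n + 1)) : D.HasLNDDegree (D x) n := by
  simp only [HasLNDDegree, ← pow_succ_apply'] at h ⊢
  exact h

theorem mul [IsDomain B] [CharZero B] (hx : D.HasLNDDegree x m) (hy : D.HasLNDDegree y n) :
    D.HasLNDDegree (x * y) (m + n) := by
  have hvanish : ∀ ij : ℕ × ℕ, m < ij.1 ∨ n < ij.2 →
      (D.toLinearMap ^ ij.1) x * (D.toLinearMap ^ ij.2) y = 0 := by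
    rintro ⟨i, j⟩ (hi | hj)
    · rw [hx.pow_apply_eq_zero hi, zero_mul]
    · rw [hy.pow_apply_eq_zero hj, mul_zero]
  constructor
  · rw [pow_apply_mul, sum_eq_single_of_mem (m, n) (mem_antidiagonal.2 rfl)]
    · exact smul_ne_zero (Nat.choose_pos (by omega)).ne' (mul_ne_zero hx.1 hy.1)
    · intro ij hij hne
      rw [hvanish ij ?_, smul_zero]
      have := mem_antidiagonal.1 hij
      by_contra!
      exact hne (Prod.ext (by omega) (by omega))
  · rw [pow_apply_mul]
    refine sum_eq_zero fun ij hij => ?_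
    rw [hvanish ij (by have := mem_antidiagonal.1 hij; omega), smul_zero]

end HasLNDDegree

end Derivation

namespace IsLND

variable {k B : Type*} [CommRing k] [CommRing B] [Algebra k B] {D : Derivation k B B}

theorem exists_hasLNDDegree (hD : IsLND D) {x : B} (hx : x ≠ 0) : ∃ n, D.HasLNDDegree x n := by
  classical
  have hex : ∃ m, (D.toLinearMap ^ m) x = 0 := hD x
  have hpos : Nat.find hex ≠ 0 := fun h => hx (by simpa [h] using Nat.find_spec hex)
  refine ⟨Nat.find hex - 1, Nat.find_min hex (by omega), ?_⟩
  rw [Nat.sub_add_cancel (Nat.one_le_iff_ne_zero.2 hpos)]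
  exact Nat.find_spec hex

/-- Since `deg (D x) = deg x - 1` while `deg (x * y) = deg x + deg y`, `D x` cannot be a nonzero
multiple of `x`. -/
theorem apply_eq_zero_of_dvd [IsDomain B] [CharZero B] (hD : IsLND D) {x : B} (h : x ∣ D x) :
    D x = 0 := by
  by_contra hDx
  obtain ⟨y, hy⟩ := h
  have hx : x ≠ 0 := by rintro rfl; exact hDx (map_zero D)
  have hy0 : y ≠ 0 := by rintro rfl; exact hDx (by rw [hy, mul_zero])
  obtain ⟨m, hm⟩ := hD.exists_hasLNDDegree hx
  obtain ⟨n, hn⟩ := hD.exists_hasLNDDegree hy0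
  obtain ⟨m, rfl⟩ : ∃ m', m = m' + 1 := by
    refine Nat.exists_eq_add_one.2 (Nat.pos_of_ne_zero fun h => hDx ?_)
    simpa [h] using hm.2
  have := (hm.mul hn).unique (hy ▸ hm.apply)
  omega

end IsLND

theorem Commute.add_pow_apply_eq_zero {R M : Type*} [CommSemiring R] [AddCommMonoid M]
    [Module R M]
    {f g : Module.End R M} (hfg : Commute f g) {x : M} {m n : ℕ} (hg : (g ^ m) x = 0)
    (hf : ∀ j, (f ^ n) ((g ^ j) x) = 0) : ((f + g) ^ (n + m)) x = 0 := by
  rw [hfg.add_pow, LinearMap.sum_apply]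
  refine sum_eq_zero fun i hi => ?_
  rw [Module.End.mul_apply, Module.End.mul_apply, Module.End.natCast_apply, map_nsmul, map_nsmul]
  rcases le_or_gt n i with hni | hin
  · rw [← Nat.sub_add_cancel hni, pow_add, Module.End.mul_apply, hf, map_zero, smul_zero]
  · have hmi : m ≤ n + m - i := by omega
    rw [← Nat.sub_add_cancel hmi, pow_add, Module.End.mul_apply, hg, map_zero, map_zero,
      smul_zero]

theorem Derivation.apply_mem_of_adjoin_eq_top {R A M : Type*} [CommSemiring R] [CommSemiring A]
    [Algebra R A] [AddCommMonoid M] [Module A M] [Module R M] [IsScalarTower R A M]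
    (D : Derivation R A M) (N : Submodule A M) {s : Set A} (hs : Algebra.adjoin R s = ⊤)
    (h : ∀ x ∈ s, D x ∈ N) (a : A) : D a ∈ N := by
  have ha : a ∈ Algebra.adjoin R s := hs ▸ Algebra.mem_top
  induction ha using Algebra.adjoin_induction with
  | mem x hx => exact h x hx
  | algebraMap r => simp
  | add x y _ _ hx hy => simpa using N.add_mem hx hy
  | mul x y _ _ hx hy => simpa using N.add_mem (N.smul_mem x hy) (N.smul_mem y hx)

namespace Polynomial

variable {k A : Type*} [CommRing k] [CommRing A] [Algebra k A]

theorem isLND_of_forall_monomial {D : Derivation k A[X] A[X]}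
    (h : ∀ n a, ∃ N, (D.toLinearMap ^ N) (monomial n a) = 0) : IsLND D := by
  intro p
  induction p using Polynomial.induction_on' with
  | add p q hp hq =>
    obtain ⟨M, hM⟩ := hp
    obtain ⟨N, hN⟩ := hq
    exact ⟨max M N, by rw [map_add, D.pow_apply_eq_zero_of_le (le_max_left M N) hM,
      D.pow_apply_eq_zero_of_le (le_max_right M N) hN, add_zero]⟩
  | monomial n a => exact h n a

theorem isLND_derivative : IsLND (derivative'.restrictScalars k : Derivation k A[X] A[X]) :=
  fun p => ⟨p.natDegree + 1, by
    rw [Module.End.pow_apply]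
    exact iterate_derivative_eq_zero (Nat.lt_succ_self _)⟩

theorem hasSlice_derivative : HasSlice (derivative'.restrictScalars k : Derivation k A[X] A[X]) :=
  ⟨X, derivative_X⟩

end Polynomial

namespace Derivation

variable {k A : Type*} [CommRing k] [CommRing A] [Algebra k A] (δ : Derivation k A A)

noncomputable def polynomialMapCoeffs : Derivation k A[X] A[X] :=
  PolynomialModule.equivPolynomialSelf.compDer δ.mapCoeffs

@[simp]
theorem coeff_polynomialMapCoeffs (p : A[X]) (i : ℕ) :
    (δ.polynomialMapCoeffs p).coeff i = δ (p.coeff i) :=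
  rfl

theorem polynomialMapCoeffs_monomial (n : ℕ) (a : A) :
    δ.polynomialMapCoeffs (monomial n a) = monomial n (δ a) := by
  ext i
  rw [coeff_polynomialMapCoeffs, coeff_monomial, coeff_monomial, apply_ite δ, map_zero]

theorem coeff_pow_polynomialMapCoeffs (N : ℕ) (p : A[X]) (i : ℕ) :
    ((δ.polynomialMapCoeffs.toLinearMap ^ N) p).coeff i = (δ.toLinearMap ^ N) (p.coeff i) := by
  induction N with
  | zero => rfl
  | succ N ih => rw [pow_succ_apply, coeff_polynomialMapCoeffs, ih, pow_succ_apply]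

theorem natDegree_pow_polynomialMapCoeffs_le (N : ℕ) (p : A[X]) :
    ((δ.polynomialMapCoeffs.toLinearMap ^ N) p).natDegree ≤ p.natDegree :=
  natDegree_le_iff_coeff_eq_zero.2 fun i hi => by
    rw [coeff_pow_polynomialMapCoeffs, coeff_eq_zero_of_natDegree_lt hi, map_zero]

theorem _root_.IsLND.polynomialMapCoeffs {δ : Derivation k A A} (hδ : IsLND δ) :
    IsLND δ.polynomialMapCoeffs :=
  isLND_of_forall_monomial fun n a => by
    obtain ⟨N, hN⟩ := hδ a
    refine ⟨N, Polynomial.ext fun i => ?_⟩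
    rw [coeff_pow_polynomialMapCoeffs, coeff_monomial, coeff_zero]
    split_ifs
    exacts [hN, map_zero _]

theorem commute_derivative_polynomialMapCoeffs :
    Commute (derivative'.restrictScalars k : Derivation k A[X] A[X]).toLinearMap
      δ.polynomialMapCoeffs.toLinearMap := by
  refine LinearMap.ext fun p => Polynomial.ext fun i => ?_
  change (derivative (δ.polynomialMapCoeffs p)).coeff i =
    (δ.polynomialMapCoeffs (derivative p)).coeff i
  rw [coeff_derivative, coeff_polynomialMapCoeffs, coeff_polynomialMapCoeffs, coeff_derivative,
    ← Nat.cast_succ, mul_comm, ← nsmul_eq_mul, mul_comm, ← nsmul_eq_mul, map_nsmul]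

end Derivation

theorem IsLND.derivative_add_polynomialMapCoeffs {k A : Type*} [CommRing k] [CommRing A]
    [Algebra k A] {δ : Derivation k A A} (hδ : IsLND δ) :
    IsLND (derivative'.restrictScalars k + δ.polynomialMapCoeffs) := by
  intro p
  obtain ⟨m, hm⟩ := hδ.polynomialMapCoeffs p
  refine ⟨p.natDegree + 1 + m,
    (δ.commute_derivative_polynomialMapCoeffs).add_pow_apply_eq_zero hm fun j => ?_⟩
  rw [Module.End.pow_apply]
  exact iterate_derivative_eq_zero
    (Nat.lt_succ_of_le (δ.natDegree_pow_polynomialMapCoeffs_le j p))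

namespace Derivation

variable {k A : Type*} [CommRing k] [CommRing A] [Algebra k A]
  (D : Derivation k A[X] A[X]) (e : ℕ)

noncomputable def coeffC : Derivation k A A :=
  (lcoeff A e).compDer (D.compAlgebraMap A)

theorem coeffC_apply (a : A) : D.coeffC e a = (D (C a)).coeff e :=
  rfl

/-- When `D` raises degrees by at most `e`, this is the component of `D` raising degrees by
exactly `e`. -/
noncomputable def gradedPart : Derivation k A[X] A[X] :=
  (X ^ e : A[X]) • (D.coeffC e).polynomialMapCoeffs +
    (C ((D X).coeff (e + 1)) * X ^ (e + 1)) • derivative'.restrictScalars k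

theorem gradedPart_monomial (n : ℕ) (a : A) :
    D.gradedPart e (monomial n a) =
      monomial (n + e) ((D (C a)).coeff e + n * (D X).coeff (e + 1) * a) := by
  simp only [gradedPart, add_apply, smul_apply, smul_eq_mul, polynomialMapCoeffs_monomial]
  change _ + _ * derivative (monomial n a) = _
  rw [coeffC_apply, X_pow_mul_monomial, derivative_monomial, C_mul_X_pow_eq_monomial,
    monomial_mul_monomial]
  rcases n with _ | n
  · simp
  rw [show e + 1 + (n + 1 - 1) = n + 1 + e by omega, ← map_add]
  congr 1
  push_cast
  ring

theorem apply_monomial_succ (n : ℕ) (a : A) :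
    D (monomial (n + 1) a) = C a * ((n + 1) • (X ^ n * D X)) + X ^ (n + 1) * D (C a) := by
  rw [← C_mul_X_pow_eq_monomial, leibniz, leibniz_pow]
  simp only [smul_eq_mul, add_tsub_cancel_right]

theorem coeff_apply_monomial (n : ℕ) (a : A) :
    (D (monomial n a)).coeff (n + e) = (D (C a)).coeff e + n * (D X).coeff (e + 1) * a := by
  rcases n with _ | n
  · simp
  rw [apply_monomial_succ, coeff_add, coeff_C_mul, coeff_smul, coeff_X_pow_mul', coeff_X_pow_mul',
    if_pos (by omega), if_pos (by omega), show n + 1 + e - n = e + 1 by omega,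
    show n + 1 + e - (n + 1) = e by omega, nsmul_eq_mul]
  push_cast
  ring

theorem gradedPart_pow_monomial_of_coeff_eq_zero (hu : (D X).coeff (e + 1) = 0) (N n : ℕ)
    (a : A) :
    ((D.gradedPart e).toLinearMap ^ N) (monomial n a) =
      monomial (n + N * e) (((D.coeffC e).toLinearMap ^ N) a) := by
  induction N with
  | zero => simp
  | succ N ih =>
    rw [pow_succ_apply, ih, gradedPart_monomial, hu, mul_zero, zero_mul, add_zero, ← coeffC_apply,
      pow_succ_apply, add_mul, one_mul, add_assoc]

variable {D e} (hC : ∀ a, (D (C a)).natDegree ≤ e) (hX : (D X).natDegree ≤ e + 1)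
include hC hX

theorem natDegree_apply_monomial_le (n : ℕ) (a : A) : (D (monomial n a)).natDegree ≤ n + e := by
  rcases n with _ | n
  · simpa using hC a
  rw [apply_monomial_succ]
  refine natDegree_add_le_of_degree_le ?_ ?_
  · refine (natDegree_C_mul_le _ _).trans <|
      (natDegree_smul_le _ _).trans (natDegree_mul_le.trans ?_)
    have := natDegree_X_pow_le (R := A) n
    omega
  · refine natDegree_mul_le.trans ?_
    have := natDegree_X_pow_le (R := A) (n + 1)
    have := hC a
    omega

theorem natDegree_apply_le {q : A[X]} {t : ℕ} (hq : q.natDegree ≤ t) :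
    (D q).natDegree ≤ t + e := by
  rw [as_sum_range' q (t + 1) (by omega), map_sum]
  exact natDegree_sum_le_of_forall_le _ _ fun n hn =>
    (natDegree_apply_monomial_le hC hX n _).trans (by simp at hn; omega)

theorem coeff_apply_add {q : A[X]} {t : ℕ} (hq : q.natDegree ≤ t) :
    (D q).coeff (t + e) = (D (C (q.coeff t))).coeff e + t * (D X).coeff (e + 1) * q.coeff t := by
  conv_lhs => rw [as_sum_range' q (t + 1) (by omega), map_sum, finsetSum_coeff, sum_range_succ]
  rw [coeff_apply_monomial, add_eq_right]
  refine sum_eq_zero fun n hn => coeff_eq_zero_of_natDegree_lt ?_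
  exact (natDegree_apply_monomial_le hC hX n _).trans_lt (by simp at hn; omega)

theorem natDegree_pow_apply_le_and_monomial_coeff {q : A[X]} {t : ℕ} (hq : q.natDegree ≤ t)
    (N : ℕ) : ((D.toLinearMap ^ N) q).natDegree ≤ t + N * e ∧
      monomial (t + N * e) (((D.toLinearMap ^ N) q).coeff (t + N * e)) =
        ((D.gradedPart e).toLinearMap ^ N) (monomial t (q.coeff t)) := by
  induction N with
  | zero => simpa using hq
  | succ N ih =>
    rw [pow_succ_apply, pow_succ_apply, ← ih.2, gradedPart_monomial,
      ← coeff_apply_add hC hX ih.1, add_one_mul, ← add_assoc]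
    exact ⟨natDegree_apply_le hC hX ih.1, rfl⟩

theorem isLND_gradedPart (hD : IsLND D) : IsLND (D.gradedPart e) :=
  isLND_of_forall_monomial fun n a => by
    obtain ⟨N, hN⟩ := hD (monomial n a)
    refine ⟨N, ?_⟩
    have := (natDegree_pow_apply_le_and_monomial_coeff hC hX
      (natDegree_monomial_le (m := n) a) N).2
    rwa [hN, coeff_zero, map_zero, coeff_monomial_same, eq_comm] at this

/-- The graded part is locally nilpotent and sends `X` to `X * (u X ^ e)`. -/
theorem coeff_apply_X_eq_zero [IsDomain A] [CharZero A] (hD : IsLND D) :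
    (D X).coeff (e + 1) = 0 := by
  have hX' : D.gradedPart e X = X * monomial e ((D X).coeff (e + 1)) := by
    rw [← monomial_one_one_eq_X, gradedPart_monomial, monomial_one_one_eq_X, X_mul_monomial,
      map_one, map_one_eq_zero, coeff_zero, Nat.cast_one, one_mul, mul_one, zero_add, add_comm]
  have := (isLND_gradedPart hC hX hD).apply_eq_zero_of_dvd ⟨_, hX'⟩
  rwa [hX', mul_eq_zero, or_iff_right X_ne_zero, monomial_eq_zero_iff] at this

theorem isLND_coeffC [IsDomain A] [CharZero A] (hD : IsLND D) : IsLND (D.coeffC e) := by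
  intro a
  obtain ⟨N, hN⟩ := hD (C a)
  refine ⟨N, ?_⟩
  have := (natDegree_pow_apply_le_and_monomial_coeff hC hX (natDegree_C a).le N).2
  rwa [hN, coeff_zero, map_zero, coeff_C_zero,
    gradedPart_pow_monomial_of_coeff_eq_zero D e (coeff_apply_X_eq_zero hC hX hD),
    eq_comm, monomial_eq_zero_iff] at this

end Derivation

theorem Derivation.exists_natDegree_apply_C_le {k A : Type*} [CommRing k] [CommRing A]
    [Algebra k A] [Algebra.FiniteType k A] (D : Derivation k A[X] A[X]) :
    ∃ d, ∀ a, (D (C a)).natDegree ≤ d := by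
  obtain ⟨s, hs⟩ := Algebra.FiniteType.out (R := k) (A := A)
  refine ⟨s.sup fun a => (D (C a)).natDegree, fun a => natDegree_le_of_degree_le ?_⟩
  refine mem_degreeLE.1 ((D.compAlgebraMap A).apply_mem_of_adjoin_eq_top _ hs (fun x hx => ?_) a)
  exact mem_degreeLE.2 (degree_le_of_natDegree_le (le_sup (f := fun a => (D (C a)).natDegree) hx))

theorem IsRigid.apply_C_eq_zero {k A : Type*} [CommRing k] [CommRing A] [IsDomain A]
    [CharZero A] [Algebra k A] [Algebra.FiniteType k A] (hA : IsRigid k A)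
    {D : Derivation k A[X] A[X]} (hD : IsLND D) (a : A) : D (C a) = 0 := by
  suffices ∀ e, (∀ b, (D (C b)).natDegree ≤ e) → (D X).natDegree ≤ e + 1 → D (C a) = 0 by
    obtain ⟨d, hd⟩ := D.exists_natDegree_apply_C_le
    exact this (max d (D X).natDegree) (fun b => (hd b).trans (le_max_left _ _)) (by omega)
  intro e
  induction e with
  | zero =>
    intro hC hX
    have hδ := congr($(hA _ (Derivation.isLND_coeffC hC hX hD)) a)
    rw [eq_C_of_natDegree_le_zero (hC a), ← Derivation.coeffC_apply, hδ, Derivation.zero_apply,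
      map_zero]
  | succ e ih =>
    intro hC hX
    have hδ := hA _ (Derivation.isLND_coeffC hC hX hD)
    have hu := Derivation.coeff_apply_X_eq_zero hC hX hD
    refine ih (fun b => natDegree_le_pred (hC b) ?_) (natDegree_le_pred hX hu)
    rw [← Derivation.coeffC_apply, hδ, Derivation.zero_apply]

theorem mem_MLstar_iff {k B : Type*} [CommRing k] [CommRing B] [Algebra k B] {x : B} :
    x ∈ MLstar k (B := B) ↔ ∀ D : Derivation k B B, IsLND D → HasSlice D → D x = 0 := by
  simp only [MLstar, Algebra.mem_iInf]
  exact ⟨fun h D hD hs => h D ⟨hD, hs⟩, fun h D hD => h D hD.1 hD.2⟩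

theorem MLstar_polynomial_subset_range_C {k A : Type*} [CommRing k] [CommRing A] [Algebra k A]
    [IsAddTorsionFree A] : (MLstar k (B := A[X]) : Set A[X]) ⊆ Set.range C := fun p hp =>
  ⟨p.coeff 0, (eq_C_of_derivative_eq_zero
    (mem_MLstar_iff.1 hp _ isLND_derivative hasSlice_derivative)).symm⟩

theorem isRigid_of_forall_C_mem_MLstar {k A : Type*} [CommRing k] [CommRing A] [Algebra k A]
    (h : ∀ a : A, C a ∈ MLstar k (B := A[X])) : IsRigid k A := by
  intro δ hδ
  ext a
  have hslice : HasSlice (derivative'.restrictScalars k + δ.polynomialMapCoeffs) := by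
    refine ⟨X, ?_⟩
    change derivative X + δ.polynomialMapCoeffs X = 1
    rw [derivative_X, ← monomial_one_one_eq_X, Derivation.polynomialMapCoeffs_monomial,
      Derivation.map_one_eq_zero, map_zero, add_zero]
  have := mem_MLstar_iff.1 (h a) _ hδ.derivative_add_polynomialMapCoeffs hslice
  change derivative (C a) + δ.polynomialMapCoeffs (C a) = 0 at this
  rwa [derivative_C, zero_add, ← monomial_zero_left, Derivation.polynomialMapCoeffs_monomial,
    monomial_eq_zero_iff] at this

/-- `C` is rigid if and only if `ML*(C[T]) = C`. -/
theorem stmt_10 {k C : Type*} [Field k] [CharZero k] [CommRing C] [IsDomain C] [Algebra k C]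
    [Algebra.FiniteType k C] :
    IsRigid k C ↔
      (MLstar k (B := Polynomial C) : Set (Polynomial C)) =
        Set.range (fun c : C => (Polynomial.C c : Polynomial C)) := by
  have : CharZero C := charZero_of_injective_algebraMap (algebraMap k C).injective
  refine ⟨fun hC => MLstar_polynomial_subset_range_C.antisymm ?_, fun h => ?_⟩
  · rintro _ ⟨a, rfl⟩
    exact mem_MLstar_iff.2 fun D hD _ => hC.apply_C_eq_zero hD a
  · exact isRigid_of_forall_C_mem_MLstar fun a => h.ge ⟨a, rfl⟩
end

section
/- Let k be a field of characteristic zero and B an affine k-domain that is semi-rigid with LND(B) ≠ {0}. Then the following are equivalent: (I) ML(B) = ML*(B); (II) there exists a k-subalgebra C of B with C rigid and B = C^[1]; (III) ML(B) is rigid and B = ML(B)^[1]. -/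
/-!
Semi-rigidity makes `ML(B)` the common kernel `K` of all nonzero locally nilpotent derivations,
while `ML*(B)` is `K` if some of them has a slice and `B` otherwise; so (I) says exactly that a
slice exists. A slice `s` of `D` gives `B = K[s]`: in characteristic zero, `D` acts on `K[s]` as
`d/ds`, and polynomials in `K[X]` can be integrated. `K` is then rigid, since a nonzero locally
nilpotent derivation of `K`, extended coefficientwise to `K[s]`, would be one of `B` killing
`s ∉ K`. Conversely `d/dX` is a locally nilpotent derivation of `C[X]` with slice `X`.
-/

open Polynomial

lemma mem_lndKer {k B : Type*} [CommRing k] [CommRing B] [Algebra k B]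
    {D : Derivation k B B} {b : B} : b ∈ lndKer D ↔ D b = 0 := Iff.rfl

lemma isLND_iff_maxGenEigenspace_eq_top {k B : Type*} [CommRing k] [CommRing B] [Algebra k B]
    (D : Derivation k B B) :
    IsLND D ↔ Module.End.maxGenEigenspace (D : Module.End k B) 0 = ⊤ := by
  simp [IsLND, Submodule.eq_top_iff', Module.End.mem_maxGenEigenspace]

lemma Polynomial.exists_derivative_eq {k R : Type*} [Field k] [CharZero k] [Semiring R]
    [Algebra k R] (q : R[X]) : ∃ Q : R[X], derivative Q = q := by
  induction q using Polynomial.induction_on' with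
  | add p q hp hq =>
    obtain ⟨P, rfl⟩ := hp
    obtain ⟨Q, rfl⟩ := hq
    exact ⟨P + Q, derivative_add⟩
  | monomial n a =>
    refine ⟨monomial (n + 1) (((n + 1 : k))⁻¹ • a), ?_⟩
    rw [derivative_monomial, Nat.add_sub_cancel, ← nsmul_eq_mul', ← Nat.cast_smul_eq_nsmul k,
      smul_smul, Nat.cast_add_one, mul_inv_cancel₀ (Nat.cast_add_one_ne_zero n), one_smul]

namespace Derivation

section CommRing

variable {k A B : Type*} [CommRing k] [CommRing A] [Algebra k A] [CommRing B] [Algebra k B]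

lemma ne_zero_of_apply_eq_one [Nontrivial A] {D : Derivation k A A} {s : A} (hs : D s = 1) :
    D ≠ 0 := by
  rintro rfl
  exact zero_ne_one hs

lemma nontrivial_of_ne_zero {D : Derivation k A A} (hD : D ≠ 0) : Nontrivial A :=
  let ⟨_, ha⟩ := DFunLike.ne_iff.1 hD
  nontrivial_of_ne _ _ ha

noncomputable def ofAlgEquiv (e : A ≃ₐ[k] B) (D : Derivation k B B) : Derivation k A A where
  toLinearMap := e.symm.toLinearMap ∘ₗ D.toLinearMap ∘ₗ e.toLinearMap
  map_one_eq_zero' := by simp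
  leibniz' _ _ := by simp [Derivation.leibniz]

@[simp] lemma ofAlgEquiv_apply (e : A ≃ₐ[k] B) (D : Derivation k B B) (a : A) :
    ofAlgEquiv e D a = e.symm (D (e a)) := rfl

lemma ofAlgEquiv_pow_apply (e : A ≃ₐ[k] B) (D : Derivation k B B) (n : ℕ) (a : A) :
    ((ofAlgEquiv e D : Module.End k A) ^ n) a = e.symm (((D : Module.End k B) ^ n) (e a)) := by
  induction n generalizing a with
  | zero => simp
  | succ n ih => rw [pow_succ, Module.End.mul_apply, ih, pow_succ, Module.End.mul_apply]; simp

lemma _root_.IsLND.ofAlgEquiv {D : Derivation k B B} (hD : IsLND D) (e : A ≃ₐ[k] B) :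
    IsLND (ofAlgEquiv e D) := fun a =>
  let ⟨n, hn⟩ := hD (e a)
  ⟨n, by rw [ofAlgEquiv_pow_apply, hn, map_zero]⟩

noncomputable def mapCoeffsSelf (δ : Derivation k A A) : Derivation k A[X] A[X] :=
  PolynomialModule.equivPolynomialSelf.compDer δ.mapCoeffs

@[simp] lemma coeff_mapCoeffsSelf (δ : Derivation k A A) (p : A[X]) (i : ℕ) :
    (mapCoeffsSelf δ p).coeff i = δ (p.coeff i) := rfl

@[simp] lemma mapCoeffsSelf_X (δ : Derivation k A A) : mapCoeffsSelf δ X = 0 := by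
  ext i
  simp [coeff_X, apply_ite δ]

@[simp] lemma mapCoeffsSelf_C (δ : Derivation k A A) (a : A) :
    mapCoeffsSelf δ (C a) = C (δ a) := by
  ext i
  simp [coeff_C, apply_ite δ]

lemma coeff_mapCoeffsSelf_pow_apply (δ : Derivation k A A) (n : ℕ) (p : A[X]) (i : ℕ) :
    (((mapCoeffsSelf δ : Module.End k A[X]) ^ n) p).coeff i =
      ((δ : Module.End k A) ^ n) (p.coeff i) := by
  induction n generalizing p with
  | zero => simp
  | succ n ih =>
    rw [pow_succ, Module.End.mul_apply, ih, pow_succ, Module.End.mul_apply]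
    rfl

lemma _root_.IsLND.mapCoeffsSelf {δ : Derivation k A A} (hδ : IsLND δ) :
    IsLND (mapCoeffsSelf δ) := by
  rw [isLND_iff_maxGenEigenspace_eq_top, Submodule.eq_top_iff']
  intro p
  induction p using Polynomial.induction_on' with
  | add p q hp hq => exact add_mem hp hq
  | monomial n a =>
    obtain ⟨m, hm⟩ := hδ a
    refine (Module.End.mem_maxGenEigenspace _ _ _).2 ⟨m, ?_⟩
    ext i
    simp [coeff_mapCoeffsSelf_pow_apply, coeff_monomial, apply_ite, hm]

lemma apply_aeval_lndKer (D : Derivation k B B) (x : B) (p : (lndKer D)[X]) :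
    D (aeval x p) = aeval x (derivative p) * D x := by
  have h0 : (0 : Derivation k (lndKer D) (lndKer D)).mapCoeffs p = 0 := by ext; simp
  simpa [h0] using (0 : Derivation k (lndKer D) (lndKer D)).apply_aeval_eq' D
    (Algebra.linearMap (lndKer D) B) (fun a => a.2.symm) x p

theorem exists_isLND_hasSlice_of_algEquiv {C : Type*} [CommRing C] [Algebra k C]
    (e : B ≃ₐ[k] C[X]) : ∃ D : Derivation k B B, IsLND D ∧ HasSlice D := by
  let d : Derivation k C[X] C[X] := (derivative' (R := C)).restrictScalars k
  have hd : IsLND d := fun p => ⟨p.natDegree + 1, by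
    rw [Module.End.pow_apply]
    exact iterate_derivative_eq_zero p.natDegree.lt_succ_self⟩
  exact ⟨ofAlgEquiv e d, hd.ofAlgEquiv e, e.symm X, by simp [d]⟩

end CommRing

section Slice

variable {k B : Type*} [Field k] [CharZero k] [CommRing B] [Algebra k B]
  {D : Derivation k B B} {s : B}

theorem aeval_injective_of_apply_eq_one (hs : D s = 1) :
    Function.Injective (aeval (R := lndKer D) s) := by
  have : IsAddTorsionFree (lndKer D) := .of_isTorsionFree k _
  refine (injective_iff_map_eq_zero _).2 fun p hp => ?_
  induction h : p.natDegree using Nat.strong_induction_on generalizing p with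
  | _ n ih =>
    have hp' : derivative p = 0 := by
      rcases Nat.eq_zero_or_pos n with hn | hn
      · exact derivative_eq_zero.2 (h.trans hn)
      · refine ih (n - 1) (by omega) _ ?_ (by rw [natDegree_derivative, h])
        rw [← mul_one (aeval s _), ← hs, ← apply_aeval_lndKer, hp, map_zero]
    rw [eq_C_of_derivative_eq_zero hp'] at hp ⊢
    rw [aeval_C] at hp
    rw [show p.coeff 0 = 0 from Subtype.ext hp, map_zero]

theorem aeval_surjective_of_apply_eq_one (hD : IsLND D) (hs : D s = 1) :
    Function.Surjective (aeval (R := lndKer D) s) := by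
  suffices ∀ n (b : B), ((D : Module.End k B) ^ n) b = 0 →
      ∃ p : (lndKer D)[X], aeval s p = b from
    fun b => (hD b).elim fun n hn => this n b hn
  intro n
  induction n with
  | zero => exact fun b hb => ⟨0, by simpa using hb.symm⟩
  | succ n ih =>
    intro b hb
    rw [pow_succ, Module.End.mul_apply] at hb
    obtain ⟨q, hq⟩ := ih (D b) hb
    obtain ⟨Q, rfl⟩ := Polynomial.exists_derivative_eq (k := k) q
    have hc : b - aeval s Q ∈ lndKer D := by
      rw [mem_lndKer, map_sub, apply_aeval_lndKer, hs, mul_one, hq, sub_self]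
    exact ⟨C ⟨_, hc⟩ + Q, by simp⟩

noncomputable def sliceEquiv (hD : IsLND D) (hs : D s = 1) : B ≃ₐ[lndKer D] (lndKer D)[X] :=
  (AlgEquiv.ofBijective (aeval s)
    ⟨aeval_injective_of_apply_eq_one hs, aeval_surjective_of_apply_eq_one hD hs⟩).symm

lemma sliceEquiv_apply_self (hD : IsLND D) (hs : D s = 1) : sliceEquiv hD hs s = X := by
  rw [sliceEquiv, AlgEquiv.symm_apply_eq]
  exact (aeval_X s).symm

theorem isRigid_lndKer_of_apply_eq_one [Nontrivial B] (hD : IsLND D) (hs : D s = 1)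
    (hker : ∀ D' : Derivation k B B, IsLND D' → D' ≠ 0 → lndKer D' = lndKer D) :
    IsRigid k (lndKer D) := by
  intro δ hδ
  let e : B ≃ₐ[k] (lndKer D)[X] := (sliceEquiv hD hs).restrictScalars k
  let D' := ofAlgEquiv e (mapCoeffsSelf δ)
  -- `D'` kills `s`, which `D` does not; semi-rigidity then forces `D' = 0`.
  have hD' : D' = 0 := by
    by_contra hne
    have hs' : s ∈ lndKer D' := by
      simp [mem_lndKer, D', e, sliceEquiv_apply_self]
    rw [hker D' (hδ.mapCoeffsSelf.ofAlgEquiv e) hne, mem_lndKer, hs] at hs'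
    exact one_ne_zero hs'
  ext a
  have := congr(e ($hD' (e.symm (C a))))
  simpa [D'] using this

end Slice

end Derivation

open Derivation

section MakarLimanov

variable {k B : Type*} [CommRing k] [CommRing B] [Algebra k B]

lemma ML_le_lndKer {D : Derivation k B B} (hD : IsLND D) : ML k ≤ lndKer D :=
  biInf_le (fun D => lndKer D) hD

lemma MLstar_le_lndKer {D : Derivation k B B} (hD : IsLND D) (hs : HasSlice D) :
    MLstar k ≤ lndKer D :=
  biInf_le (fun D => lndKer D) (show IsLND D ∧ HasSlice D from ⟨hD, hs⟩)

lemma ML_le_MLstar : ML k (B := B) ≤ MLstar k :=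
  le_iInf₂ fun _ hD => ML_le_lndKer hD.1

lemma MLstar_eq_top (h : ∀ D : Derivation k B B, IsLND D → ¬ HasSlice D) :
    MLstar k (B := B) = ⊤ :=
  eq_top_iff.2 <| le_iInf₂ fun D hD => (h D hD.1 hD.2).elim

lemma ML_eq_lndKer {D0 : Derivation k B B} (h0 : IsLND D0)
    (hker : ∀ D : Derivation k B B, IsLND D → D ≠ 0 → lndKer D = lndKer D0) :
    ML k (B := B) = lndKer D0 := by
  refine le_antisymm (ML_le_lndKer h0) (le_iInf₂ fun D hD => ?_)
  rcases eq_or_ne D 0 with rfl | hne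
  · exact fun b _ => mem_lndKer.2 rfl
  · exact (hker D hD hne).ge

theorem ML_eq_MLstar_iff_exists_slice {D0 : Derivation k B B} (h0 : IsLND D0) (hne : D0 ≠ 0)
    (hker : ∀ D : Derivation k B B, IsLND D → D ≠ 0 → lndKer D = lndKer D0) :
    ML k (B := B) = MLstar k ↔ ∃ D : Derivation k B B, IsLND D ∧ HasSlice D := by
  have := nontrivial_of_ne_zero hne
  rw [ML_eq_lndKer h0 hker]
  constructor
  · intro h
    by_contra! hno
    obtain ⟨b, hb⟩ := DFunLike.ne_iff.1 hne
    rw [MLstar_eq_top hno] at h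
    exact hb ((SetLike.ext_iff.1 h b).2 Algebra.mem_top)
  · rintro ⟨D, hD, s, hs⟩
    refine le_antisymm ?_ ?_
    · exact (ML_eq_lndKer h0 hker).symm.le.trans ML_le_MLstar
    · exact (MLstar_le_lndKer hD ⟨s, hs⟩).trans (hker D hD (ne_zero_of_apply_eq_one hs)).le

end MakarLimanov

theorem stmt_12_general {k B : Type*} [Field k] [CharZero k] [CommRing B] [Algebra k B]
    (hsr : ∃ D0 : Derivation k B B, IsLND D0 ∧ D0 ≠ 0 ∧
      ∀ D : Derivation k B B, IsLND D → D ≠ 0 → lndKer D = lndKer D0) :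
    (ML k (B := B) = MLstar k (B := B) ↔
      ∃ C : Subalgebra k B, IsRigid k C ∧ Nonempty (B ≃ₐ[C] Polynomial C)) ∧
    (ML k (B := B) = MLstar k (B := B) ↔
      (IsRigid k (ML k (B := B)) ∧
        Nonempty (B ≃ₐ[ML k (B := B)] Polynomial (ML k (B := B))))) := by
  obtain ⟨D0, h0, hne, hker⟩ := hsr
  have := nontrivial_of_ne_zero hne
  have hslice := ML_eq_MLstar_iff_exists_slice h0 hne hker
  have hIII : ML k (B := B) = MLstar k → IsRigid k (ML k (B := B)) ∧
      Nonempty (B ≃ₐ[ML k (B := B)] (ML k (B := B))[X]) := by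
    intro h
    obtain ⟨D, hD, s, hs⟩ := hslice.1 h
    have hDD0 := hker D hD (ne_zero_of_apply_eq_one hs)
    rw [ML_eq_lndKer h0 hker, ← hDD0]
    exact ⟨isRigid_lndKer_of_apply_eq_one hD hs fun D' h1 h2 => (hker D' h1 h2).trans hDD0.symm,
      ⟨sliceEquiv hD hs⟩⟩
  have hII : ∀ C : Subalgebra k B, Nonempty (B ≃ₐ[C] C[X]) → ML k (B := B) = MLstar k :=
    fun C ⟨e⟩ => hslice.2 (exists_isLND_hasSlice_of_algEquiv (e.restrictScalars k))
  refine ⟨⟨fun h => ⟨_, hIII h⟩, ?_⟩, ⟨hIII, ?_⟩⟩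
  · rintro ⟨C, -, e⟩
    exact hII C e
  · rintro ⟨-, e⟩
    exact hII _ e

/-- For a semi-rigid affine domain `B` with `LND(B) ≠ {0}`, the following are equivalent:
(I) `ML(B) = ML*(B)`; (II) `B = C^[1]` for some rigid subalgebra `C`;
(III) `ML(B)` is rigid and `B = ML(B)^[1]`. -/
theorem stmt_12 {k B : Type*} [Field k] [CharZero k] [CommRing B] [IsDomain B] [Algebra k B]
    [Algebra.FiniteType k B]
    (hsr : ∃ D0 : Derivation k B B, IsLND D0 ∧ D0 ≠ 0 ∧
      ∀ D : Derivation k B B, IsLND D → D ≠ 0 → lndKer D = lndKer D0) :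
    (ML k (B := B) = MLstar k (B := B) ↔
      ∃ C : Subalgebra k B, IsRigid k C ∧ Nonempty (B ≃ₐ[C] Polynomial C)) ∧
    (ML k (B := B) = MLstar k (B := B) ↔
      (IsRigid k (ML k (B := B)) ∧
        Nonempty (B ≃ₐ[ML k (B := B)] Polynomial (ML k (B := B))))) :=
  stmt_12_general hsr
end
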